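/- In the decentralized finite-sum setting with the D-GET algorithm, suppose there is ε₂ ≥ 0 such that for every r ≥ 0 with q dividing r, E‖v^r − G(x^r)‖² ≤ ε₂. Then for every r ≥ 0: ∑_{t=0}^{r} E‖v^{t+1} − v^t‖² ≤ 24L²(2∑_{t=0}^{r} E‖x^t − 𝟙x̄^t‖² + α²∑_{t=0}^{r} E‖y^t − 𝟙ȳ^t‖² + α²∑_{t=0}^{r} E‖𝟙ȳ^t‖²) + 6(r+1)ε₂. -/

import Mathlib

open Finset MeasureTheory ProbabilityTheory

noncomputable section

/-- Euclidean space `ℝ^d`. -/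
abbrev Vec (d : ℕ) := EuclideanSpace ℝ (Fin d)

/-- Stacked space `(ℝ^d)^m` with the Euclidean (ℓ²) norm. -/
abbrev Stack (m d : ℕ) := PiLp 2 (fun _ : Fin m => Vec d)

/-- Blockwise action of an `m × m` matrix on `(ℝ^d)^m`. -/
def Wact {m d : ℕ} (W : Matrix (Fin m) (Fin m) ℝ) (x : Stack m d) : Stack m d :=
  WithLp.toLp 2 (fun i => ∑ k, W i k • x k)

/-- Matrix-vector product, valued in Euclidean space. -/
def mulVecE {m : ℕ} (W : Matrix (Fin m) (Fin m) ℝ) (u : Vec m) : Vec m :=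
  WithLp.toLp 2 (fun i => ∑ k, W i k * u k)

/-- Block average `x̄ = (1/m) ∑ᵢ xᵢ`. -/
def blockAvg {m d : ℕ} (x : Stack m d) : Vec d := (m : ℝ)⁻¹ • ∑ i, x i

/-- The stacked vector `𝟙 u` all of whose `m` blocks equal `u`. -/
def oneVec {m d : ℕ} (u : Vec d) : Stack m d := WithLp.toLp 2 (fun _ => u)

/-- Local cost of node `i` in the finite-sum setting: `fᶦ = (1/n) ∑ⱼ fᶦⱼ`. -/
def fLoc {m d n : ℕ} (f : Fin m → Fin n → Vec d → ℝ) (i : Fin m) : Vec d → ℝ :=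
  fun w => (n : ℝ)⁻¹ * ∑ j, f i j w

/-- Global cost `f = (1/m) ∑ᵢ fᶦ`. -/
def fTot {m d n : ℕ} (f : Fin m → Fin n → Vec d → ℝ) : Vec d → ℝ :=
  fun w => (m : ℝ)⁻¹ * ∑ i, fLoc f i w

/-- Stacked gradient `G(x) = (∇f¹(x₁),…,∇fᵐ(x_m))`. -/
def Gmap {m d n : ℕ} (f : Fin m → Fin n → Vec d → ℝ) (x : Stack m d) : Stack m d :=
  WithLp.toLp 2 (fun i => gradient (fLoc f i) (x i))

/-- Network-average gradient `(1/m) ∑ᵢ ∇fᶦ(xᵢ)`. -/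
def avgGrad {m d n : ℕ} (f : Fin m → Fin n → Vec d → ℝ) (x : Stack m d) : Vec d :=
  (m : ℝ)⁻¹ • ∑ i, gradient (fLoc f i) (x i)

/-!
Between two refresh rounds (`q ∣ r`) the estimator error `eₜ = vᵗ - G(xᵗ)` grows by conditionally
centred minibatch noise, so `E‖eₜ₊₁‖² ≤ E‖eₜ‖² + L² E‖xᵗ⁺¹ - xᵗ‖²`, and it vanishes at refresh
rounds. The increment `‖vᵗ⁺¹ - vᵗ‖²` is at most `L² ‖xᵗ⁺¹ - xᵗ‖²` at estimation rounds and at most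
`2L² ‖xᵗ⁺¹ - xᵗ‖² + 2‖eₜ‖²` at refresh rounds; with the potential `2 E‖eₜ‖²` this gives
`∑ E‖vᵗ⁺¹ - vᵗ‖² ≤ 4L² ∑ E‖xᵗ⁺¹ - xᵗ‖²`. Finally `xᵗ⁺¹ - xᵗ = (W - I)(xᵗ - 𝟙x̄ᵗ) - α yᵗ` and
`W - I` has norm at most 2 on stacks with zero block sum. All iterates are functions of the finitely
many samples drawn so far, which makes every expectation finite and lets the fresh samples be
averaged out by independence.
-/

open scoped InnerProductSpace ENNReal

lemma inv_mul_sum_le {k : ℕ} (a : Fin k → ℝ) {c : ℝ} (hc : 0 ≤ c) (h : ∀ j, a j ≤ c) :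
    (k : ℝ)⁻¹ * ∑ j, a j ≤ c := by
  rcases Nat.eq_zero_or_pos k with rfl | hk
  · simpa using hc
  · rw [inv_mul_le_iff₀ (by positivity)]
    simpa using sum_le_sum fun j (_ : j ∈ univ) => h j

section NormInequalities

variable {E : Type*}

lemma norm_add_sq_le [SeminormedAddCommGroup E] (a b : E) :
    ‖a + b‖ ^ 2 ≤ 2 * (‖a‖ ^ 2 + ‖b‖ ^ 2) :=
  (pow_le_pow_left₀ (norm_nonneg _) (norm_add_le a b) 2).trans add_sq_le

lemma norm_add₃_sq_le [SeminormedAddCommGroup E] (a b c : E) :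
    ‖a + b + c‖ ^ 2 ≤ 3 * (‖a‖ ^ 2 + ‖b‖ ^ 2 + ‖c‖ ^ 2) := by
  have h := pow_le_pow_left₀ (norm_nonneg _) (norm_add₃_le (a := a) (b := b) (c := c)) 2
  nlinarith [sq_nonneg (‖a‖ - ‖b‖), sq_nonneg (‖a‖ - ‖c‖), sq_nonneg (‖b‖ - ‖c‖)]

lemma norm_sum_sq_le_card_mul [SeminormedAddCommGroup E] {ι : Type*} (s : Finset ι)
    (u : ι → E) : ‖∑ i ∈ s, u i‖ ^ 2 ≤ #s * ∑ i ∈ s, ‖u i‖ ^ 2 :=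
  (pow_le_pow_left₀ (norm_nonneg _) (norm_sum_le s u) 2).trans (sq_sum_le_card_mul_sum_sq ..)

variable [SeminormedAddCommGroup E] [NormedSpace ℝ E]

lemma norm_avg_sq_le {k : ℕ} (u : Fin k → E) :
    ‖(k : ℝ)⁻¹ • ∑ b, u b‖ ^ 2 ≤ (k : ℝ)⁻¹ * ∑ b, ‖u b‖ ^ 2 := by
  have h := norm_sum_sq_le_card_mul univ u
  rw [card_univ, Fintype.card_fin] at h
  rw [norm_smul, mul_pow, norm_inv, Real.norm_natCast]
  calc ((k : ℝ)⁻¹) ^ 2 * ‖∑ b, u b‖ ^ 2 ≤ ((k : ℝ)⁻¹) ^ 2 * (k * ∑ b, ‖u b‖ ^ 2) := by gcongr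
    _ = (k : ℝ)⁻¹ * ((k : ℝ)⁻¹ * k) * ∑ b, ‖u b‖ ^ 2 := by ring
    _ ≤ (k : ℝ)⁻¹ * ∑ b, ‖u b‖ ^ 2 := by
      rcases Nat.eq_zero_or_pos k with rfl | hk
      · simp
      · rw [inv_mul_cancel₀ (by positivity), mul_one]

lemma norm_avg_sq_le_sq {k : ℕ} (u : Fin k → E) {c : ℝ} (h : ∀ b, ‖u b‖ ≤ c) :
    ‖(k : ℝ)⁻¹ • ∑ b, u b‖ ^ 2 ≤ c ^ 2 :=
  (norm_avg_sq_le u).trans <|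
    inv_mul_sum_le _ (sq_nonneg c) fun b => pow_le_pow_left₀ (norm_nonneg _) (h b) 2

lemma sum_sub_avg_eq_zero {k : ℕ} (g : Fin k → E) :
    ∑ j, (g j - (k : ℝ)⁻¹ • ∑ j', g j') = 0 := by
  rcases Nat.eq_zero_or_pos k with rfl | hk
  · simp
  · rw [sum_sub_distrib, sum_const, card_univ, Fintype.card_fin, ← Nat.cast_smul_eq_nsmul ℝ,
      smul_inv_smul₀ (by positivity), sub_self]

end NormInequalities

section Variance

variable {E : Type*} [NormedAddCommGroup E] [InnerProductSpace ℝ E]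

lemma sum_inner_sub_avg_eq_zero {k : ℕ} (a : E) (g : Fin k → E) :
    ∑ j, ⟪a, g j - (k : ℝ)⁻¹ • ∑ j', g j'⟫_ℝ = 0 := by
  rw [← inner_sum, sum_sub_avg_eq_zero, inner_zero_right]

lemma sum_norm_sub_avg_sq_le {k : ℕ} (g : Fin k → E) :
    ∑ j, ‖g j - (k : ℝ)⁻¹ • ∑ j', g j'‖ ^ 2 ≤ ∑ j, ‖g j‖ ^ 2 := by
  set c := (k : ℝ)⁻¹ • ∑ j', g j'
  have hcross : ∑ j, ⟪g j - c, c⟫_ℝ = 0 := by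
    rw [← sum_inner, sum_sub_avg_eq_zero, inner_zero_left]
  have hexp : ∀ j, ‖g j - c‖ ^ 2 = ‖g j‖ ^ 2 - 2 * ⟪g j - c, c⟫_ℝ - ‖c‖ ^ 2 := by
    intro j
    have := norm_add_sq_real (g j - c) c
    rw [sub_add_cancel] at this
    linarith
  simp only [hexp, sum_sub_distrib, ← mul_sum, hcross]
  have : 0 ≤ ∑ _j : Fin k, ‖c‖ ^ 2 := sum_nonneg fun _ _ => sq_nonneg _
  linarith

end Variance

lemma PiLp.norm_sq_le_of_forall {ι : Type*} [Fintype ι] {β : ι → Type*}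
    [∀ i, SeminormedAddCommGroup (β i)] {z w : PiLp 2 β} {c : ℝ}
    (h : ∀ i, ‖z i‖ ^ 2 ≤ c * ‖w i‖ ^ 2) : ‖z‖ ^ 2 ≤ c * ‖w‖ ^ 2 := by
  simp only [PiLp.norm_sq_eq_of_L2, mul_sum]
  exact sum_le_sum fun i _ => h i

lemma integral_norm_sq_eq_sum {Ω ι : Type*} [MeasurableSpace Ω] {μ : Measure Ω} [Fintype ι]
    {β : ι → Type*} [∀ i, NormedAddCommGroup (β i)] {Z : Ω → PiLp 2 β}
    (hZ : ∀ i, Integrable (fun ω => ‖Z ω i‖ ^ 2) μ) :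
    ∫ ω, ‖Z ω‖ ^ 2 ∂μ = ∑ i, ∫ ω, ‖Z ω i‖ ^ 2 ∂μ := by
  simp only [PiLp.norm_sq_eq_of_L2]
  exact integral_finsetSum _ fun i _ => hZ i

section Mixing

variable {m d : ℕ} (W : Matrix (Fin m) (Fin m) ℝ)

@[simp] lemma oneVec_apply (u : Vec d) (i : Fin m) : (oneVec u : Stack m d) i = u := rfl

lemma Wact_apply (x : Stack m d) (i : Fin m) : Wact W x i = ∑ k, W i k • x k := rfl

lemma Wact_add (x z : Stack m d) : Wact W (x + z) = Wact W x + Wact W z := by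
  ext i : 1
  simp only [Wact_apply, PiLp.add_apply, smul_add, sum_add_distrib]

lemma Wact_oneVec (hW1 : W.mulVec (fun _ => 1) = fun _ => 1) (u : Vec d) :
    Wact W (oneVec u) = oneVec u := by
  ext i : 1
  have hrow : ∑ k, W i k = 1 := by simpa [Matrix.mulVec, dotProduct] using congrFun hW1 i
  simp only [Wact_apply, oneVec_apply, ← sum_smul, hrow, one_smul]

lemma sum_sub_blockAvg (x : Stack m d) : ∑ i, (x - oneVec (blockAvg x) : Stack m d) i = 0 :=
  sum_sub_avg_eq_zero (fun i => x i)

def stackCol (x : Stack m d) (l : Fin d) : Vec m := WithLp.toLp 2 (fun i => x i l)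

lemma norm_sq_eq_sum_stackCol (x : Stack m d) : ‖x‖ ^ 2 = ∑ l, ‖stackCol x l‖ ^ 2 := by
  simp only [PiLp.norm_sq_eq_of_L2]
  rw [sum_comm]
  rfl

lemma stackCol_Wact (x : Stack m d) (l : Fin d) :
    stackCol (Wact W x) l = mulVecE W (stackCol x l) := by
  ext i
  simp [stackCol, mulVecE, Wact_apply]

lemma norm_Wact_sq_le {c : ℝ} (hW : ∀ u : Vec m, ∑ k, u k = 0 → ‖mulVecE W u‖ ≤ c * ‖u‖)
    {x : Stack m d} (hx : ∑ i, x i = 0) : ‖Wact W x‖ ^ 2 ≤ c ^ 2 * ‖x‖ ^ 2 := by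
  rw [norm_sq_eq_sum_stackCol, norm_sq_eq_sum_stackCol, mul_sum]
  refine sum_le_sum fun l _ => ?_
  have hcol : ∑ i, stackCol x l i = 0 := by simpa [stackCol] using congrArg (· l) hx
  rw [stackCol_Wact, ← mul_pow]
  exact pow_le_pow_left₀ (norm_nonneg _) (hW _ hcol) 2

lemma norm_mix_step_sub_sq_le (hW1 : W.mulVec (fun _ => 1) = fun _ => 1)
    (hW : ∀ u : Vec m, ∑ k, u k = 0 → ‖mulVecE W u‖ ≤ ‖u‖) (α : ℝ) (x y : Stack m d) :
    ‖(Wact W x - α • y) - x‖ ^ 2 ≤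
      12 * ‖x - oneVec (blockAvg x)‖ ^ 2 + 3 * α ^ 2 * ‖y - oneVec (blockAvg y)‖ ^ 2
        + 3 * α ^ 2 * ‖(oneVec (blockAvg y) : Stack m d)‖ ^ 2 := by
  set z := x - oneVec (blockAvg x) with hz_def
  have hWx : Wact W x = Wact W z + oneVec (blockAvg x) := by
    rw [← Wact_oneVec W hW1 (blockAvg x), ← Wact_add, sub_add_cancel]
  have hsplit : (Wact W x - α • y) - x = (Wact W z - z) + -(α • (y - oneVec (blockAvg y)))
      + -(α • (oneVec (blockAvg y) : Stack m d)) := by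
    rw [hWx, smul_sub, hz_def]
    abel
  have hz : ‖Wact W z‖ ≤ ‖z‖ := by
    have := norm_Wact_sq_le W (c := 1) (by simpa using hW) (sum_sub_blockAvg x)
    rw [one_pow, one_mul] at this
    exact pow_le_pow_iff_left₀ (norm_nonneg _) (norm_nonneg _) two_ne_zero |>.mp this
  have hmix : ‖Wact W z - z‖ ^ 2 ≤ 4 * ‖z‖ ^ 2 := by
    nlinarith [norm_sub_le (Wact W z) z, norm_nonneg (Wact W z - z)]
  rw [hsplit]
  refine (norm_add₃_sq_le _ _ _).trans ?_
  simp only [norm_neg, norm_smul, mul_pow, Real.norm_eq_abs, sq_abs]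
  linarith

section Gradient

lemma gradient_const_mul_sum {F ι : Type*} [NormedAddCommGroup F] [InnerProductSpace ℝ F]
    [CompleteSpace F] (s : Finset ι) (c : ℝ) {g : ι → F → ℝ} {w : F}
    (hg : ∀ j ∈ s, DifferentiableAt ℝ (g j) w) :
    gradient (fun w => c * ∑ j ∈ s, g j w) w = c • ∑ j ∈ s, gradient (g j) w := by
  simp only [gradient]
  rw [fderiv_const_mul (DifferentiableAt.fun_sum hg), fderiv_fun_sum hg, map_smul, map_sum]

variable {m d n : ℕ} {f : Fin m → Fin n → Vec d → ℝ}

lemma gradient_fLoc (hdiff : ∀ i j, Differentiable ℝ (f i j)) (i : Fin m) (w : Vec d) :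
    gradient (fLoc f i) w = (n : ℝ)⁻¹ • ∑ j, gradient (f i j) w :=
  gradient_const_mul_sum univ _ fun j _ => (hdiff i j).differentiableAt

lemma Gmap_sub_apply (hdiff : ∀ i j, Differentiable ℝ (f i j)) (x x' : Stack m d) (i : Fin m) :
    (Gmap f x - Gmap f x') i =
      (n : ℝ)⁻¹ • ∑ j, (gradient (f i j) (x i) - gradient (f i j) (x' i)) := by
  simp only [PiLp.sub_apply, Gmap, gradient_fLoc hdiff, ← smul_sub, ← sum_sub_distrib]

lemma norm_Gmap_sub_sq_le (hdiff : ∀ i j, Differentiable ℝ (f i j)) {L : ℝ}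
    (hlip : ∀ i j (u u' : Vec d), ‖gradient (f i j) u - gradient (f i j) u'‖ ≤ L * ‖u - u'‖)
    (x x' : Stack m d) : ‖Gmap f x - Gmap f x'‖ ^ 2 ≤ L ^ 2 * ‖x - x'‖ ^ 2 :=
  PiLp.norm_sq_le_of_forall fun i => by
    rw [Gmap_sub_apply hdiff, PiLp.sub_apply, ← mul_pow]
    exact norm_avg_sq_le_sq _ fun j => hlip i j _ _

end Gradient

section History

variable {Ω κ α : Type*} [Fintype κ]

def historyIdx (κ : Type*) [Fintype κ] (t : ℕ) : Finset (ℕ × κ) := range (t + 1) ×ˢ univ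

/-- A function factoring through `history ξ t` is a function of the samples of rounds `0, …, t`:
this replaces measurability with respect to the natural filtration. -/
def history (ξ : ℕ × κ → Ω → α) (t : ℕ) (ω : Ω) : historyIdx κ t → α := fun p => ξ p ω

variable {ξ : ℕ × κ → Ω → α} {t : ℕ}

lemma history_eq_of_history_succ_eq {ω ω' : Ω} (h : history ξ (t + 1) ω = history ξ (t + 1) ω') :
    history ξ t ω = history ξ t ω' := by
  funext ⟨p, hp⟩
  refine congrFun h ⟨p, ?_⟩
  simp only [historyIdx, mem_product, mem_range] at hp ⊢
  exact ⟨by omega, hp.2⟩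

lemma Function.FactorsThrough.history_succ {β : Type*} {Z : Ω → β}
    (hZ : Z.FactorsThrough (history ξ t)) : Z.FactorsThrough (history ξ (t + 1)) :=
  fun _ _ h => hZ (history_eq_of_history_succ_eq h)

lemma factorsThrough_history_succ_sample (k : κ) :
    (ξ (t + 1, k)).FactorsThrough (history ξ (t + 1)) :=
  fun _ _ h => congrFun h ⟨(t + 1, k), by simp [historyIdx]⟩

variable [MeasurableSpace Ω] {μ : Measure Ω} [MeasurableSpace α]

lemma measurable_history (hξ : ∀ p, Measurable (ξ p)) (t : ℕ) : Measurable (history ξ t) :=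
  measurable_pi_lambda _ fun p => hξ p

lemma Function.FactorsThrough.integrable_of_history [IsFiniteMeasure μ] [Finite α]
    [MeasurableSingletonClass α] {E : Type*} [NormedAddCommGroup E] (hξ : ∀ p, Measurable (ξ p))
    {Z : Ω → E} (hZ : Z.FactorsThrough (history ξ t)) : Integrable Z μ := by
  rw [← hZ.extend_comp fun _ => 0]
  exact Integrable.of_finite.comp_measurable (measurable_history hξ t)

lemma indepFun_sample_history (hξ : ∀ p, Measurable (ξ p)) (hind : iIndepFun ξ μ) (k : κ) :
    IndepFun (ξ (t + 1, k)) (history ξ t) μ := by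
  have hdisj : Disjoint {(t + 1, k)} (historyIdx κ t) := by simp [historyIdx]
  exact (hind.indepFun_finset _ _ hdisj hξ).comp
    (measurable_pi_apply ⟨(t + 1, k), mem_singleton_self _⟩) measurable_id

end History

section UniformSample

variable {Ω : Type*} [MeasurableSpace Ω] {μ : Measure Ω} {n : ℕ}

lemma integral_comp_eq_avg_of_indepFun {β : Type*} [MeasurableSpace β] {X : Ω → Fin n}
    {Y : Ω → β} (hX : Measurable X) (hY : Measurable Y) (hXY : IndepFun X Y μ)
    (hunif : ∀ j, μ {ω | X ω = j} = (n : ℝ≥0∞)⁻¹) (φ : Fin n → β → ℝ)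
    (hφ : ∀ j, Measurable (φ j)) (hint : ∀ j, Integrable (fun ω => φ j (Y ω)) μ) :
    ∫ ω, φ (X ω) (Y ω) ∂μ = ∫ ω, (n : ℝ)⁻¹ * ∑ j, φ j (Y ω) ∂μ := by
  let e : Fin n → Fin n → ℝ := fun j i => if i = j then 1 else 0
  have hdecomp : ∀ ω, φ (X ω) (Y ω) = ∑ j, e j (X ω) * φ j (Y ω) := by
    intro ω
    simp [e]
  have he_int : ∀ j, ∫ ω, e j (X ω) ∂μ = (n : ℝ)⁻¹ := by
    intro j
    have : (fun ω => e j (X ω)) = (X ⁻¹' {j}).indicator 1 := by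
      ext ω
      by_cases h : X ω = j <;> simp [e, h]
    rw [this, integral_indicator_one (hX (measurableSet_singleton j)), measureReal_def]
    change (μ {ω | X ω = j}).toReal = _
    rw [hunif, ENNReal.toReal_inv, ENNReal.toReal_natCast]
  have hterm_int : ∀ j, Integrable (fun ω => e j (X ω) * φ j (Y ω)) μ := fun j =>
    (hint j).bdd_mul ((measurable_of_finite (e j)).comp hX).aestronglyMeasurable (c := 1)
      (ae_of_all _ fun ω => by simp only [e]; split_ifs <;> simp)
  have hterm : ∀ j, ∫ ω, e j (X ω) * φ j (Y ω) ∂μ = (n : ℝ)⁻¹ * ∫ ω, φ j (Y ω) ∂μ := by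
    intro j
    rw [← he_int j]
    exact hXY.integral_comp_mul_comp (f := e j) (g := φ j) hX.aemeasurable hY.aemeasurable
      (measurable_of_finite _).aestronglyMeasurable (hφ j).aestronglyMeasurable
  simp_rw [hdecomp]
  rw [integral_finsetSum _ fun j _ => hterm_int j, integral_const_mul,
    integral_finsetSum _ fun j _ => hint j, mul_sum]
  exact sum_congr rfl fun j _ => hterm j

variable {κ : Type*} [Fintype κ] {ξ : ℕ × κ → Ω → Fin n} {t : ℕ}

lemma integral_sample_eq_avg [IsFiniteMeasure μ] (hξ : ∀ p, Measurable (ξ p)) (hind : iIndepFun ξ μ)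
    (hunif : ∀ p j, μ {ω | ξ p ω = j} = (n : ℝ≥0∞)⁻¹) (k : κ) (φ : Fin n → Ω → ℝ)
    (hφ : ∀ j, (φ j).FactorsThrough (history ξ t)) :
    ∫ ω, φ (ξ (t + 1, k) ω) ω ∂μ = ∫ ω, (n : ℝ)⁻¹ * ∑ j, φ j ω ∂μ := by
  have hext : ∀ j ω, Function.extend (history ξ t) (φ j) (fun _ => 0) (history ξ t ω) = φ j ω :=
    fun j => (hφ j).extend_apply _
  have key := integral_comp_eq_avg_of_indepFun (hξ _) (measurable_history hξ t)
    (indepFun_sample_history hξ hind k) (hunif _)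
    (fun j => Function.extend (history ξ t) (φ j) (fun _ => 0)) (fun j => measurable_of_finite _)
    (fun j => ((hφ j).integrable_of_history hξ).congr (ae_of_all _ fun ω => (hext j ω).symm))
  simpa only [hext] using key

end UniformSample

section Minibatch

variable {Ω κ : Type*} [Fintype κ] [MeasurableSpace Ω] {μ : Measure Ω} [IsFiniteMeasure μ]
  {n : ℕ} {ξ : ℕ × κ → Ω → Fin n} {t S : ℕ}

lemma integral_minibatch_eq_avg (hξ : ∀ p, Measurable (ξ p)) (hind : iIndepFun ξ μ)
    (hunif : ∀ p j, μ {ω | ξ p ω = j} = (n : ℝ≥0∞)⁻¹) (hS : 0 < S) (s : Fin S → κ)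
    (φ : Fin n → Ω → ℝ) (hφ : ∀ j, (φ j).FactorsThrough (history ξ t)) :
    ∫ ω, (S : ℝ)⁻¹ * ∑ b, φ (ξ (t + 1, s b) ω) ω ∂μ = ∫ ω, (n : ℝ)⁻¹ * ∑ j, φ j ω ∂μ := by
  have hint : ∀ b, Integrable (fun ω => φ (ξ (t + 1, s b) ω) ω) μ := fun b =>
    Function.FactorsThrough.integrable_of_history hξ fun ω ω' h => by
      rw [factorsThrough_history_succ_sample (s b) h, (hφ _).history_succ h]
  rw [integral_const_mul, integral_finsetSum _ fun b _ => hint b]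
  simp only [integral_sample_eq_avg hξ hind hunif _ φ hφ, sum_const, card_univ,
    Fintype.card_fin, nsmul_eq_mul, ← mul_assoc]
  rw [inv_mul_cancel₀ (by positivity), one_mul]

variable {E : Type*} [NormedAddCommGroup E] [InnerProductSpace ℝ E]

lemma integral_norm_sq_add_minibatch_le (hξ : ∀ p, Measurable (ξ p)) (hind : iIndepFun ξ μ)
    (hunif : ∀ p j, μ {ω | ξ p ω = j} = (n : ℝ≥0∞)⁻¹) (hS : 0 < S) (s : Fin S → κ)
    {A : Ω → E} {g : Fin n → Ω → E} (hA : A.FactorsThrough (history ξ t))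
    (hg : ∀ j, (g j).FactorsThrough (history ξ t)) :
    ∫ ω, ‖A ω + (S : ℝ)⁻¹ • ∑ b, (g (ξ (t + 1, s b) ω) ω - (n : ℝ)⁻¹ • ∑ j, g j ω)‖ ^ 2 ∂μ
      ≤ ∫ ω, ‖A ω‖ ^ 2 ∂μ + ∫ ω, (n : ℝ)⁻¹ * ∑ j, ‖g j ω‖ ^ 2 ∂μ := by
  set c : Ω → E := fun ω => (n : ℝ)⁻¹ • ∑ j, g j ω
  set M : Ω → E := fun ω => (S : ℝ)⁻¹ • ∑ b, (g (ξ (t + 1, s b) ω) ω - c ω)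
  have hI : ∀ Z : Ω → ℝ, (∀ ω ω', A ω = A ω' → (∀ j, g j ω = g j ω') →
      (∀ b, ξ (t + 1, s b) ω = ξ (t + 1, s b) ω') → Z ω = Z ω') → Integrable Z μ :=
    fun Z hZ => Function.FactorsThrough.integrable_of_history (t := t + 1) hξ fun ω ω' h =>
      hZ ω ω' (hA.history_succ h) (fun j => (hg j).history_succ h)
        (fun b => factorsThrough_history_succ_sample (s b) h)
  have hcross : ∫ ω, ⟪A ω, M ω⟫_ℝ ∂μ = 0 := by
    have hexp : ∀ ω, ⟪A ω, M ω⟫_ℝ = (S : ℝ)⁻¹ * ∑ b, ⟪A ω, g (ξ (t + 1, s b) ω) ω - c ω⟫_ℝ :=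
      fun ω => by simp only [M, inner_smul_right, inner_sum]
    rw [integral_congr_ae (ae_of_all _ hexp), integral_minibatch_eq_avg hξ hind hunif hS s
      (fun j ω => ⟪A ω, g j ω - c ω⟫_ℝ) fun j ω ω' h => by simp only [c, hA h, fun j => hg j h]]
    simp only [c, sum_inner_sub_avg_eq_zero, mul_zero, integral_zero]
  have hsq : ∫ ω, ‖M ω‖ ^ 2 ∂μ ≤ ∫ ω, (n : ℝ)⁻¹ * ∑ j, ‖g j ω‖ ^ 2 ∂μ := calc
    ∫ ω, ‖M ω‖ ^ 2 ∂μ ≤ ∫ ω, (S : ℝ)⁻¹ * ∑ b, ‖g (ξ (t + 1, s b) ω) ω - c ω‖ ^ 2 ∂μ :=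
      integral_mono (hI _ fun _ _ _ hg hs => by simp only [M, c, hg, hs])
        (hI _ fun _ _ _ hg hs => by simp only [c, hg, hs]) fun _ => norm_avg_sq_le _
    _ = ∫ ω, (n : ℝ)⁻¹ * ∑ j, ‖g j ω - c ω‖ ^ 2 ∂μ :=
      integral_minibatch_eq_avg hξ hind hunif hS s (fun j ω => ‖g j ω - c ω‖ ^ 2)
        fun j ω ω' h => by simp only [c, fun j => hg j h]
    _ ≤ ∫ ω, (n : ℝ)⁻¹ * ∑ j, ‖g j ω‖ ^ 2 ∂μ :=
      integral_mono (hI _ fun _ _ _ hg _ => by simp only [c, hg])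
        (hI _ fun _ _ _ hg _ => by simp only [hg]) fun _ =>
          mul_le_mul_of_nonneg_left (sum_norm_sub_avg_sq_le _) (by positivity)
  have hIA : Integrable (fun ω => ‖A ω‖ ^ 2) μ := hI _ fun _ _ hA _ _ => by rw [hA]
  have hIAM : Integrable (fun ω => 2 * ⟪A ω, M ω⟫_ℝ) μ :=
    hI _ fun _ _ hA hg hs => by simp only [M, c, hA, hg, hs]
  have hIM : Integrable (fun ω => ‖M ω‖ ^ 2) μ :=
    hI _ fun _ _ _ hg hs => by simp only [M, c, hg, hs]
  calc ∫ ω, ‖A ω + M ω‖ ^ 2 ∂μ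
      = ∫ ω, ‖A ω‖ ^ 2 ∂μ + 2 * ∫ ω, ⟪A ω, M ω⟫_ℝ ∂μ + ∫ ω, ‖M ω‖ ^ 2 ∂μ := by
        simp only [norm_add_sq_real]
        rw [integral_add (f := fun ω => ‖A ω‖ ^ 2 + 2 * ⟪A ω, M ω⟫_ℝ) (hIA.add hIAM) hIM,
          integral_add hIA hIAM, integral_const_mul]
    _ ≤ _ := by rw [hcross]; linarith

end Minibatch

lemma integral_le_add_of_le {Ω : Type*} [MeasurableSpace Ω] {μ : Measure Ω} {F G H : Ω → ℝ}
    {a b : ℝ} (hF : Integrable F μ) (hG : Integrable G μ) (hH : Integrable H μ)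
    (h : ∀ ω, F ω ≤ a * G ω + b * H ω) : ∫ ω, F ω ∂μ ≤ a * ∫ ω, G ω ∂μ + b * ∫ ω, H ω ∂μ := by
  rw [← integral_const_mul, ← integral_const_mul, ← integral_add (hG.const_mul a) (hH.const_mul b)]
  exact integral_mono hF ((hG.const_mul a).add (hH.const_mul b)) h

lemma sum_le_four_mul_sum_of_refresh {s D e : ℕ → ℝ} {c : ℝ} (P : ℕ → Prop) (hc : 0 ≤ c)
    (hD : ∀ t, 0 ≤ D t) (he : ∀ t, 0 ≤ e t) (he0 : e 0 = 0)
    (hrefresh : ∀ t, P (t + 1) → s t ≤ 2 * c * D t + 2 * e t ∧ e (t + 1) = 0)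
    (hestimate : ∀ t, ¬ P (t + 1) → s t ≤ c * D t ∧ e (t + 1) ≤ e t + c * D t) (r : ℕ) :
    ∑ t ∈ range r, s t ≤ 4 * c * ∑ t ∈ range r, D t := by
  -- `2 e` is a potential paying for the error accumulated since the last refresh
  suffices h : ∀ r, ∑ t ∈ range r, s t + 2 * e r ≤ 4 * c * ∑ t ∈ range r, D t by
    linarith [h r, he r]
  intro r
  induction r with
  | zero => simp [he0]
  | succ r ih =>
    have hcD := mul_nonneg hc (hD r)
    rw [sum_range_succ, sum_range_succ]
    by_cases hP : P (r + 1)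
    · obtain ⟨hs, he'⟩ := hrefresh r hP
      rw [he']
      linarith
    · obtain ⟨hs, he'⟩ := hestimate r hP
      linarith

section DGET

variable {m d n q S2 : ℕ} {α : ℝ} {f : Fin m → Fin n → Vec d → ℝ}
  {W : Matrix (Fin m) (Fin m) ℝ} {Ω : Type*} {J : ℕ → Fin S2 → Fin m → Ω → Fin n}
  {x0 : Stack m d} {x v y : ℕ → Ω → Stack m d}

/-- All sample indices as one family over (round, batch slot, node), the form in which their
independence is assumed. -/
def samples (J : ℕ → Fin S2 → Fin m → Ω → Fin n) : ℕ × Fin S2 × Fin m → Ω → Fin n :=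
  fun p => J p.1 p.2.1 p.2.2

structure IsDGETTrajectory (q S2 : ℕ) (α : ℝ) (f : Fin m → Fin n → Vec d → ℝ)
    (W : Matrix (Fin m) (Fin m) ℝ) (J : ℕ → Fin S2 → Fin m → Ω → Fin n) (x0 : Stack m d)
    (x v y : ℕ → Ω → Stack m d) : Prop where
  x_zero : ∀ ω, x 0 ω = x0
  y_zero : ∀ ω, y 0 ω = v 0 ω
  x_succ : ∀ r ω, x (r + 1) ω = Wact W (x r ω) - α • y r ω
  v_refresh : ∀ r, q ∣ r → ∀ ω, v r ω = Gmap f (x r ω)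
  v_succ_estimate : ∀ r, ¬ q ∣ (r + 1) → ∀ ω i, v (r + 1) ω i =
    (S2 : ℝ)⁻¹ • ∑ b, (gradient (f i (J (r + 1) b i ω)) (x (r + 1) ω i)
      - gradient (f i (J (r + 1) b i ω)) (x r ω i)) + v r ω i
  y_succ : ∀ r ω, y (r + 1) ω = Wact W (y r ω) + v (r + 1) ω - v r ω

namespace IsDGETTrajectory

variable (h : IsDGETTrajectory q S2 α f W J x0 x v y)
include h

lemma factorsThrough_history (t : ℕ) :
    (x t).FactorsThrough (history (samples J) t) ∧ (v t).FactorsThrough (history (samples J) t)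
      ∧ (y t).FactorsThrough (history (samples J) t) := by
  induction t with
  | zero =>
    have hx : (x 0).FactorsThrough (history (samples J) 0) := fun ω ω' _ => by
      rw [h.x_zero, h.x_zero]
    have hv : (v 0).FactorsThrough (history (samples J) 0) := fun ω ω' hω => by
      rw [h.v_refresh 0 (dvd_zero q), h.v_refresh 0 (dvd_zero q), hx hω]
    exact ⟨hx, hv, fun ω ω' hω => by rw [h.y_zero, h.y_zero, hv hω]⟩
  | succ t ih =>
    obtain ⟨hx, hv, hy⟩ := ih
    have hx' : (x (t + 1)).FactorsThrough (history (samples J) (t + 1)) := fun ω ω' hω => by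
      rw [h.x_succ, h.x_succ, hx.history_succ hω, hy.history_succ hω]
    have hv' : (v (t + 1)).FactorsThrough (history (samples J) (t + 1)) := fun ω ω' hω => by
      by_cases hq : q ∣ t + 1
      · rw [h.v_refresh _ hq, h.v_refresh _ hq, hx' hω]
      · have hJ : ∀ b i, J (t + 1) b i ω = J (t + 1) b i ω' := fun b i =>
          factorsThrough_history_succ_sample (b, i) hω
        ext i : 1
        rw [h.v_succ_estimate t hq, h.v_succ_estimate t hq, hx' hω, hx.history_succ hω,
          hv.history_succ hω]
        simp only [hJ]
    refine ⟨hx', hv', fun ω ω' hω => ?_⟩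
    rw [h.y_succ, h.y_succ, hy.history_succ hω, hv' hω, hv.history_succ hω]

lemma x_succ_factorsThrough_history (t : ℕ) :
    (x (t + 1)).FactorsThrough (history (samples J) t) := fun ω ω' hω => by
  obtain ⟨hx, -, hy⟩ := h.factorsThrough_history t
  rw [h.x_succ, h.x_succ, hx hω, hy hω]

lemma integrable [MeasurableSpace Ω] {μ : Measure Ω} [IsFiniteMeasure μ]
    (hJmeas : ∀ r b i, Measurable (J r b i)) (t : ℕ)
    (Φ : Stack m d → Stack m d → Stack m d → Stack m d → Stack m d → ℝ) :
    Integrable (fun ω => Φ (x t ω) (v t ω) (y t ω) (x (t + 1) ω) (v (t + 1) ω)) μ := by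
  obtain ⟨hx, hv, hy⟩ := h.factorsThrough_history t
  obtain ⟨hx', hv', -⟩ := h.factorsThrough_history (t + 1)
  refine Function.FactorsThrough.integrable_of_history (ξ := samples J) (t := t + 1)
    (fun p => hJmeas _ _ _) fun ω ω' hω => ?_
  rw [hx.history_succ hω, hv.history_succ hω, hy.history_succ hω, hx' hω, hv' hω]

lemma integral_norm_v_sub_Gmap_sq_eq_zero_of_refresh [MeasurableSpace Ω] {μ : Measure Ω} {t : ℕ}
    (ht : q ∣ t) :
    ∫ ω, ‖v t ω - Gmap f (x t ω)‖ ^ 2 ∂μ = 0 := by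
  simp [h.v_refresh t ht]

lemma v_sub_Gmap_succ_apply (hdiff : ∀ i j, Differentiable ℝ (f i j)) (hS2 : 0 < S2) {t : ℕ}
    (ht : ¬ q ∣ t + 1) (ω : Ω) (i : Fin m) :
    (v (t + 1) ω - Gmap f (x (t + 1) ω)) i = (v t ω - Gmap f (x t ω)) i
      + (S2 : ℝ)⁻¹ • ∑ b, ((gradient (f i (J (t + 1) b i ω)) (x (t + 1) ω i)
          - gradient (f i (J (t + 1) b i ω)) (x t ω i))
        - (n : ℝ)⁻¹ • ∑ j, (gradient (f i j) (x (t + 1) ω i) - gradient (f i j) (x t ω i))) := by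
  rw [sum_sub_distrib, smul_sub, sum_const, card_univ, Fintype.card_fin,
    ← Nat.cast_smul_eq_nsmul ℝ, inv_smul_smul₀ (by positivity),
    ← Gmap_sub_apply hdiff, PiLp.sub_apply, PiLp.sub_apply, PiLp.sub_apply,
    h.v_succ_estimate t ht]
  abel

section Moments

variable [MeasurableSpace Ω] {μ : Measure Ω} [IsFiniteMeasure μ]
  (hJmeas : ∀ r b i, Measurable (J r b i))
include hJmeas

lemma integral_norm_x_succ_sub_sq_le (hW1 : W.mulVec (fun _ => 1) = fun _ => 1)
    (hW : ∀ u : Vec m, ∑ k, u k = 0 → ‖mulVecE W u‖ ≤ ‖u‖) (t : ℕ) :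
    ∫ ω, ‖x (t + 1) ω - x t ω‖ ^ 2 ∂μ ≤
      12 * ∫ ω, ‖x t ω - oneVec (blockAvg (x t ω))‖ ^ 2 ∂μ
        + 3 * α ^ 2 * (∫ ω, ‖y t ω - oneVec (blockAvg (y t ω))‖ ^ 2 ∂μ
          + ∫ ω, ‖(oneVec (blockAvg (y t ω)) : Stack m d)‖ ^ 2 ∂μ) := by
  have hI := h.integrable (μ := μ) hJmeas t
  rw [← integral_add (hI fun _ _ y _ _ => ‖y - oneVec (blockAvg y)‖ ^ 2)
    (hI fun _ _ y _ _ => ‖(oneVec (blockAvg y) : Stack m d)‖ ^ 2)]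
  refine integral_le_add_of_le (hI fun x _ _ x' _ => ‖x' - x‖ ^ 2)
    (hI fun x _ _ _ _ => ‖x - oneVec (blockAvg x)‖ ^ 2)
    (hI fun _ _ y _ _ => ‖y - oneVec (blockAvg y)‖ ^ 2 + ‖(oneVec (blockAvg y) : Stack m d)‖ ^ 2)
    fun ω => ?_
  rw [h.x_succ]
  linarith [norm_mix_step_sub_sq_le W hW1 hW α (x t ω) (y t ω)]

lemma integral_norm_v_succ_sub_sq_le_of_refresh (hdiff : ∀ i j, Differentiable ℝ (f i j)) {L : ℝ}
    (hlip : ∀ i j (u u' : Vec d), ‖gradient (f i j) u - gradient (f i j) u'‖ ≤ L * ‖u - u'‖)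
    {t : ℕ} (ht : q ∣ t + 1) :
    ∫ ω, ‖v (t + 1) ω - v t ω‖ ^ 2 ∂μ ≤
      2 * L ^ 2 * ∫ ω, ‖x (t + 1) ω - x t ω‖ ^ 2 ∂μ
        + 2 * ∫ ω, ‖v t ω - Gmap f (x t ω)‖ ^ 2 ∂μ := by
  have hI := h.integrable (μ := μ) hJmeas t
  refine integral_le_add_of_le (hI fun _ v _ _ v' => ‖v' - v‖ ^ 2)
    (hI fun x _ _ x' _ => ‖x' - x‖ ^ 2) (hI fun x v _ _ _ => ‖v - Gmap f x‖ ^ 2) fun ω => ?_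
  have hsplit : v (t + 1) ω - v t ω =
      (Gmap f (x (t + 1) ω) - Gmap f (x t ω)) + (Gmap f (x t ω) - v t ω) := by
    rw [h.v_refresh _ ht]
    abel
  have hadd := norm_add_sq_le (Gmap f (x (t + 1) ω) - Gmap f (x t ω)) (Gmap f (x t ω) - v t ω)
  rw [norm_sub_rev (Gmap f (x t ω))] at hadd
  rw [hsplit]
  linarith [norm_Gmap_sub_sq_le hdiff hlip (x (t + 1) ω) (x t ω)]

lemma integral_norm_v_succ_sub_sq_le_of_estimate {L : ℝ}
    (hlip : ∀ i j (u u' : Vec d), ‖gradient (f i j) u - gradient (f i j) u'‖ ≤ L * ‖u - u'‖)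
    {t : ℕ} (ht : ¬ q ∣ t + 1) :
    ∫ ω, ‖v (t + 1) ω - v t ω‖ ^ 2 ∂μ ≤ L ^ 2 * ∫ ω, ‖x (t + 1) ω - x t ω‖ ^ 2 ∂μ := by
  have hI := h.integrable (μ := μ) hJmeas t
  rw [← integral_const_mul]
  refine integral_mono (hI fun _ v _ _ v' => ‖v' - v‖ ^ 2)
    ((hI fun x _ _ x' _ => ‖x' - x‖ ^ 2).const_mul _) fun ω =>
      PiLp.norm_sq_le_of_forall fun i => ?_
  rw [PiLp.sub_apply, h.v_succ_estimate t ht, add_sub_cancel_right, ← mul_pow]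
  exact norm_avg_sq_le_sq _ fun b => hlip i _ _ _

lemma integral_norm_v_sub_Gmap_succ_sq_le_of_estimate
    (hJunif : ∀ r b i j, μ {ω | J r b i ω = j} = (n : ℝ≥0∞)⁻¹)
    (hJindep : iIndepFun (fun p : ℕ × Fin S2 × Fin m => J p.1 p.2.1 p.2.2) μ) (hS2 : 0 < S2)
    (hdiff : ∀ i j, Differentiable ℝ (f i j)) {L : ℝ}
    (hlip : ∀ i j (u u' : Vec d), ‖gradient (f i j) u - gradient (f i j) u'‖ ≤ L * ‖u - u'‖)
    {t : ℕ} (ht : ¬ q ∣ t + 1) :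
    ∫ ω, ‖v (t + 1) ω - Gmap f (x (t + 1) ω)‖ ^ 2 ∂μ ≤
      ∫ ω, ‖v t ω - Gmap f (x t ω)‖ ^ 2 ∂μ + L ^ 2 * ∫ ω, ‖x (t + 1) ω - x t ω‖ ^ 2 ∂μ := by
  have hI := h.integrable (μ := μ) hJmeas t
  obtain ⟨hx, hv, -⟩ := h.factorsThrough_history t
  have hx' := h.x_succ_factorsThrough_history t
  have hblock : ∀ i, ∫ ω, ‖(v (t + 1) ω - Gmap f (x (t + 1) ω)) i‖ ^ 2 ∂μ ≤
      ∫ ω, ‖(v t ω - Gmap f (x t ω)) i‖ ^ 2 ∂μ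
        + L ^ 2 * ∫ ω, ‖(x (t + 1) ω - x t ω) i‖ ^ 2 ∂μ := by
    intro i
    simp_rw [h.v_sub_Gmap_succ_apply hdiff hS2 ht _ i]
    refine (integral_norm_sq_add_minibatch_le (ξ := samples J) (fun p => hJmeas _ _ _) hJindep
      (fun p => hJunif p.1 p.2.1 p.2.2) hS2 (fun b => (b, i))
      (g := fun j ω => gradient (f i j) (x (t + 1) ω i) - gradient (f i j) (x t ω i))
      (fun ω ω' hω => by rw [hx hω, hv hω]) fun j ω ω' hω => by simp only [hx hω, hx' hω]).trans
      ((add_le_add_iff_left _).mpr ?_)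
    rw [← integral_const_mul]
    refine integral_mono (hI fun x _ _ x' _ => (n : ℝ)⁻¹ * ∑ j,
        ‖gradient (f i j) (x' i) - gradient (f i j) (x i)‖ ^ 2)
      ((hI fun x _ _ x' _ => ‖(x' - x) i‖ ^ 2).const_mul _) fun ω => ?_
    refine inv_mul_sum_le _ (by positivity) fun j => ?_
    rw [← mul_pow]
    exact pow_le_pow_left₀ (norm_nonneg _) (hlip i j _ _) 2
  rw [integral_norm_sq_eq_sum fun i => hI fun _ _ _ x' v' => ‖(v' - Gmap f x') i‖ ^ 2,
    integral_norm_sq_eq_sum fun i => hI fun x v _ _ _ => ‖(v - Gmap f x) i‖ ^ 2,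
    integral_norm_sq_eq_sum fun i => hI fun x _ _ x' _ => ‖(x' - x) i‖ ^ 2, mul_sum,
    ← sum_add_distrib]
  exact sum_le_sum fun i _ => hblock i

lemma sum_integral_norm_v_succ_sub_sq_le
    (hJunif : ∀ r b i j, μ {ω | J r b i ω = j} = (n : ℝ≥0∞)⁻¹)
    (hJindep : iIndepFun (fun p : ℕ × Fin S2 × Fin m => J p.1 p.2.1 p.2.2) μ) (hS2 : 0 < S2)
    (hdiff : ∀ i j, Differentiable ℝ (f i j)) {L : ℝ}
    (hlip : ∀ i j (u u' : Vec d), ‖gradient (f i j) u - gradient (f i j) u'‖ ≤ L * ‖u - u'‖)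
    (r : ℕ) :
    ∑ t ∈ range r, ∫ ω, ‖v (t + 1) ω - v t ω‖ ^ 2 ∂μ ≤
      4 * L ^ 2 * ∑ t ∈ range r, ∫ ω, ‖x (t + 1) ω - x t ω‖ ^ 2 ∂μ :=
  sum_le_four_mul_sum_of_refresh (e := fun t => ∫ ω, ‖v t ω - Gmap f (x t ω)‖ ^ 2 ∂μ)
    (q ∣ ·) (sq_nonneg L) (fun _ => integral_nonneg fun _ => sq_nonneg _)
    (fun _ => integral_nonneg fun _ => sq_nonneg _)
    (h.integral_norm_v_sub_Gmap_sq_eq_zero_of_refresh (dvd_zero q))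
    (fun _ ht => ⟨h.integral_norm_v_succ_sub_sq_le_of_refresh hJmeas hdiff hlip ht,
      h.integral_norm_v_sub_Gmap_sq_eq_zero_of_refresh ht⟩)
    (fun _ ht => ⟨h.integral_norm_v_succ_sub_sq_le_of_estimate hJmeas hlip ht,
      h.integral_norm_v_sub_Gmap_succ_sq_le_of_estimate hJmeas hJunif hJindep hS2 hdiff hlip ht⟩) r

end Moments

end IsDGETTrajectory

end DGET

theorem stmt12_general
    (m d n q S2 : ℕ) (hS2 : 0 < S2)
    (L η α : ℝ) (hη1 : η < 1)
    (f : Fin m → Fin n → Vec d → ℝ)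
    (hdiff : ∀ i j, Differentiable ℝ (f i j))
    (hlip : ∀ i j (u u' : Vec d),
      ‖gradient (f i j) u - gradient (f i j) u'‖ ≤ L * ‖u - u'‖)
    (W : Matrix (Fin m) (Fin m) ℝ)
    (hW1 : W.mulVec (fun _ => (1 : ℝ)) = fun _ => (1 : ℝ))
    (hWcontract : ∀ u : Vec m, (∑ k, u k) = 0 → ‖mulVecE W u‖ ≤ η * ‖u‖)
    (Ω : Type) [MeasurableSpace Ω] (μ : Measure Ω) [IsProbabilityMeasure μ]
    (J : ℕ → Fin S2 → Fin m → Ω → Fin n)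
    (hJmeas : ∀ r b i, Measurable (J r b i))
    (hJunif : ∀ r b i j, μ {ω | J r b i ω = j} = (n : ENNReal)⁻¹)
    (hJindep : iIndepFun
      (fun p : ℕ × Fin S2 × Fin m => J p.1 p.2.1 p.2.2) μ)
    (x0 : Stack m d) (x v y : ℕ → Ω → Stack m d)
    (hx0 : ∀ ω, x 0 ω = x0)
    (hy0 : ∀ ω, y 0 ω = v 0 ω)
    (hxrec : ∀ r ω, x (r + 1) ω = Wact W (x r ω) - α • y r ω)
    (hvfull : ∀ r, q ∣ r → ∀ ω, v r ω = Gmap f (x r ω))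
    (hvest : ∀ r, ¬ q ∣ (r + 1) → ∀ ω i, v (r + 1) ω i =
      (S2 : ℝ)⁻¹ • ∑ b, (gradient (f i (J (r + 1) b i ω)) (x (r + 1) ω i)
        - gradient (f i (J (r + 1) b i ω)) (x r ω i)) + v r ω i)
    (hyrec : ∀ r ω, y (r + 1) ω = Wact W (y r ω) + v (r + 1) ω - v r ω)
    (ε₂ : ℝ) (hε₂0 : 0 ≤ ε₂) :
    ∀ r : ℕ,
      (∑ t ∈ Finset.range (r + 1), ∫ ω, ‖v (t + 1) ω - v t ω‖ ^ 2 ∂μ) ≤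
        24 * L ^ 2 *
          (2 * ∑ t ∈ Finset.range (r + 1), ∫ ω, ‖x t ω - oneVec (blockAvg (x t ω))‖ ^ 2 ∂μ
            + α ^ 2 * ∑ t ∈ Finset.range (r + 1), ∫ ω, ‖y t ω - oneVec (blockAvg (y t ω))‖ ^ 2 ∂μ
            + α ^ 2 * ∑ t ∈ Finset.range (r + 1),
                ∫ ω, ‖(oneVec (blockAvg (y t ω)) : Stack m d)‖ ^ 2 ∂μ)
        + 6 * (r + 1) * ε₂ := by
  intro r
  have h : IsDGETTrajectory q S2 α f W J x0 x v y := ⟨hx0, hy0, hxrec, hvfull, hvest, hyrec⟩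
  have hW : ∀ u : Vec m, ∑ k, u k = 0 → ‖mulVecE W u‖ ≤ ‖u‖ := fun u hu =>
    (hWcontract u hu).trans (mul_le_of_le_one_left (norm_nonneg u) hη1.le)
  have hdisp := sum_le_sum fun t (_ : t ∈ range (r + 1)) =>
    h.integral_norm_x_succ_sub_sq_le (μ := μ) hJmeas hW1 hW t
  simp only [sum_add_distrib, ← mul_sum] at hdisp
  have hY : 0 ≤ ∑ t ∈ range (r + 1), ∫ ω, ‖y t ω - oneVec (blockAvg (y t ω))‖ ^ 2 ∂μ :=
    sum_nonneg fun t _ => integral_nonneg fun ω => sq_nonneg _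
  have hZ : 0 ≤ ∑ t ∈ range (r + 1), ∫ ω, ‖(oneVec (blockAvg (y t ω)) : Stack m d)‖ ^ 2 ∂μ :=
    sum_nonneg fun t _ => integral_nonneg fun ω => sq_nonneg _
  calc _ ≤ 4 * L ^ 2 * ∑ t ∈ range (r + 1), ∫ ω, ‖x (t + 1) ω - x t ω‖ ^ 2 ∂μ :=
        h.sum_integral_norm_v_succ_sub_sq_le hJmeas hJunif hJindep hS2 hdiff hlip (r + 1)
    _ ≤ _ := by
      nlinarith [mul_le_mul_of_nonneg_left hdisp (sq_nonneg L),
        mul_nonneg (mul_nonneg (sq_nonneg L) (sq_nonneg α)) (add_nonneg hY hZ),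
        mul_nonneg (by positivity : (0 : ℝ) ≤ 6 * (r + 1)) hε₂0]

/-- bound on the accumulated successive differences of the local gradient
estimates, assuming the estimation error at every outer iteration (`q ∣ r`) is at most `ε₂`. -/
theorem stmt12
    (m d n q S2 : ℕ) (hm : 0 < m) (hn : 0 < n) (hq : 1 ≤ q) (hS2 : 0 < S2)
    (L η α : ℝ) (hL : 0 ≤ L) (hη0 : 0 ≤ η) (hη1 : η < 1) (hα : 0 < α)
    (f : Fin m → Fin n → Vec d → ℝ)
    (hdiff : ∀ i j, Differentiable ℝ (f i j))
    (hlip : ∀ i j (u u' : Vec d),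
      ‖gradient (f i j) u - gradient (f i j) u'‖ ≤ L * ‖u - u'‖)
    (W : Matrix (Fin m) (Fin m) ℝ) (hWsymm : W.IsSymm)
    (hW1 : W.mulVec (fun _ => (1 : ℝ)) = fun _ => (1 : ℝ))
    (hWcontract : ∀ u : Vec m, (∑ k, u k) = 0 → ‖mulVecE W u‖ ≤ η * ‖u‖)
    (Ω : Type) [MeasurableSpace Ω] (μ : Measure Ω) [IsProbabilityMeasure μ]
    (J : ℕ → Fin S2 → Fin m → Ω → Fin n)
    (hJmeas : ∀ r b i, Measurable (J r b i))
    (hJunif : ∀ r b i j, μ {ω | J r b i ω = j} = (n : ENNReal)⁻¹)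
    (hJindep : iIndepFun
      (fun p : ℕ × Fin S2 × Fin m => J p.1 p.2.1 p.2.2) μ)
    (x0 : Stack m d) (x v y : ℕ → Ω → Stack m d)
    (hx0 : ∀ ω, x 0 ω = x0)
    (hy0 : ∀ ω, y 0 ω = v 0 ω)
    (hxrec : ∀ r ω, x (r + 1) ω = Wact W (x r ω) - α • y r ω)
    (hvfull : ∀ r, q ∣ r → ∀ ω, v r ω = Gmap f (x r ω))
    (hvest : ∀ r, ¬ q ∣ (r + 1) → ∀ ω i, v (r + 1) ω i =
      (S2 : ℝ)⁻¹ • ∑ b, (gradient (f i (J (r + 1) b i ω)) (x (r + 1) ω i)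
        - gradient (f i (J (r + 1) b i ω)) (x r ω i)) + v r ω i)
    (hyrec : ∀ r ω, y (r + 1) ω = Wact W (y r ω) + v (r + 1) ω - v r ω)
    (ε₂ : ℝ) (hε₂0 : 0 ≤ ε₂)
    (hε₂ : ∀ r, q ∣ r → (∫ ω, ‖v r ω - Gmap f (x r ω)‖ ^ 2 ∂μ) ≤ ε₂) :
    ∀ r : ℕ,
      (∑ t ∈ Finset.range (r + 1), ∫ ω, ‖v (t + 1) ω - v t ω‖ ^ 2 ∂μ) ≤
        24 * L ^ 2 *
          (2 * ∑ t ∈ Finset.range (r + 1), ∫ ω, ‖x t ω - oneVec (blockAvg (x t ω))‖ ^ 2 ∂μ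
            + α ^ 2 * ∑ t ∈ Finset.range (r + 1), ∫ ω, ‖y t ω - oneVec (blockAvg (y t ω))‖ ^ 2 ∂μ
            + α ^ 2 * ∑ t ∈ Finset.range (r + 1),
                ∫ ω, ‖(oneVec (blockAvg (y t ω)) : Stack m d)‖ ^ 2 ∂μ)
        + 6 * (r + 1) * ε₂ :=
  stmt12_general m d n q S2 hS2 L η α hη1 f hdiff hlip W hW1 hWcontract Ω μ J hJmeas hJunif hJindep
    x0 x v y hx0 hy0 hxrec hvfull hvest hyrec ε₂ hε₂0
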